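/- Fix n ≥ 1 and 1 ≤ k ≤ n. The triangular arrays (b_{i,j})_{i>j} of nonnegative integers satisfying b_{n,i}+...+b_{i+1,i} ≤ n_i + sum_{k'=1}^{i-1} b_{i,k'} for all i ∈ [n-1], where a fixed (k-1)-subset J of the variables b_{n,j} (j ∈ [n-1]) is required to be 0, n_i = i for i ∈ J, and n_i = i−1 otherwise, are in bijection (summing over all choices of J) with triangular arrays (b̃_{i,j})_{i>j} of nonnegative integers satisfying b̃_{n,i}+...+b̃_{i+1,i} ≤ i + sum_{k'=1}^{i-1} b̃_{i,k'} for all i ∈ [n-1] such that exactly k-1 of these n-1 inequalities hold with equality. -/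

import Mathlib

/-!
The last-row entries `b n j` occur in exactly one of the inequalities, namely the `j`-th, and
only on its left-hand side. For `j ∈ J` the entry is `0`, and replacing it by the slack of the
`j`-th inequality (taken with bound `j`) makes that inequality tight; for `j ∉ J` the bound
`j - 1` means the inequality with bound `j` is strict. So `J` is recovered as the set of tight
rows, and resetting the last-row entries of the tight rows to `0` inverts the construction.
-/

open Finset

namespace TriangularArray

def IsSupported (n : ℕ) (b : ℕ → ℕ → ℕ) : Prop :=
  ∀ i j, ¬(1 ≤ j ∧ j + 1 ≤ i ∧ i ≤ n) → b i j = 0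

def colSum (n : ℕ) (b : ℕ → ℕ → ℕ) (i : ℕ) : ℕ := ∑ l ∈ Icc (i + 1) n, b l i

def innerColSum (n : ℕ) (b : ℕ → ℕ → ℕ) (i : ℕ) : ℕ := ∑ l ∈ Icc (i + 1) (n - 1), b l i

def rowSum (b : ℕ → ℕ → ℕ) (i : ℕ) : ℕ := ∑ k ∈ Icc 1 (i - 1), b i k

def tightRows (n : ℕ) (b : ℕ → ℕ → ℕ) : Finset ℕ :=
  (Icc 1 (n - 1)).filter fun i => colSum n b i = i + rowSum b i

def restrictedArrays (n k : ℕ) : Set (Finset ℕ × (ℕ → ℕ → ℕ)) :=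
  {p | p.1 ⊆ Icc 1 (n - 1) ∧ p.1.card = k - 1 ∧ IsSupported n p.2 ∧ (∀ j ∈ p.1, p.2 n j = 0) ∧
    ∀ i, 1 ≤ i → i ≤ n - 1 → colSum n p.2 i ≤ (if i ∈ p.1 then i else i - 1) + rowSum p.2 i}

def tightArrays (n k : ℕ) : Set (ℕ → ℕ → ℕ) :=
  {b | IsSupported n b ∧ (∀ i, 1 ≤ i → i ≤ n - 1 → colSum n b i ≤ i + rowSum b i) ∧
    (tightRows n b).card = k - 1}

/-- Replace `b n j`, for `j ∈ J`, by the slack of the `j`-th inequality. -/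
def fillLastRow (n : ℕ) (J : Finset ℕ) (b : ℕ → ℕ → ℕ) : ℕ → ℕ → ℕ := fun i j =>
  if i = n ∧ j ∈ J then j + rowSum b j - innerColSum n b j else b i j

def clearLastRow (n : ℕ) (E : Finset ℕ) (b : ℕ → ℕ → ℕ) : ℕ → ℕ → ℕ := fun i j =>
  if i = n ∧ j ∈ E then 0 else b i j

variable {n i : ℕ} {J E : Finset ℕ} {b b' : ℕ → ℕ → ℕ}

theorem colSum_eq_innerColSum_add (hi : i < n) :
    colSum n b i = innerColSum n b i + b n i := by
  obtain ⟨m, rfl⟩ : ∃ m, n = m + 1 := ⟨n - 1, by omega⟩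
  exact sum_Icc_succ_top (by omega) _

theorem innerColSum_congr (h : ∀ l ≠ n, b' l = b l) :
    innerColSum n b' i = innerColSum n b i :=
  sum_congr rfl fun l hl => by
    rw [h l (by simp only [mem_Icc] at hl; omega)]

theorem rowSum_congr (h : b' i = b i) : rowSum b' i = rowSum b i := by
  simp only [rowSum, h]

theorem mem_tightRows :
    i ∈ tightRows n b ↔ (1 ≤ i ∧ i ≤ n - 1) ∧ colSum n b i = i + rowSum b i := by
  rw [tightRows, mem_filter, mem_Icc]

theorem fillLastRow_of_ne (h : i ≠ n) : fillLastRow n J b i = b i := by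
  ext j
  simp [fillLastRow, h]

theorem fillLastRow_last_of_mem (hi : i ∈ J) :
    fillLastRow n J b n i = i + rowSum b i - innerColSum n b i := by
  simp [fillLastRow, hi]

theorem fillLastRow_last_of_notMem (hi : i ∉ J) : fillLastRow n J b n i = b n i := by
  simp [fillLastRow, hi]

theorem clearLastRow_of_ne (h : i ≠ n) : clearLastRow n E b i = b i := by
  ext j
  simp [clearLastRow, h]

theorem clearLastRow_last (E : Finset ℕ) :
    clearLastRow n E b n i = if i ∈ E then 0 else b n i := by
  simp [clearLastRow]

theorem IsSupported.fillLastRow (hb : IsSupported n b) (hJ : J ⊆ Icc 1 (n - 1)) :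
    IsSupported n (fillLastRow n J b) := by
  intro i j hij
  by_cases h : i = n ∧ j ∈ J
  · have := mem_Icc.mp (hJ h.2)
    omega
  · simpa [TriangularArray.fillLastRow, h] using hb i j hij

theorem IsSupported.clearLastRow (hb : IsSupported n b) (E : Finset ℕ) :
    IsSupported n (clearLastRow n E b) := by
  intro i j hij
  simp [TriangularArray.clearLastRow, hb i j hij]

theorem colSum_fillLastRow (hi₁ : 1 ≤ i) (hin : i < n)
    (hle : colSum n b i ≤ (if i ∈ J then i else i - 1) + rowSum b i) (hzero : i ∈ J → b n i = 0) :
    colSum n (fillLastRow n J b) i ≤ i + rowSum (fillLastRow n J b) i ∧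
      (colSum n (fillLastRow n J b) i = i + rowSum (fillLastRow n J b) i ↔ i ∈ J) := by
  have hrow : ∀ l ≠ n, fillLastRow n J b l = b l := fun l hl => fillLastRow_of_ne hl
  rw [colSum_eq_innerColSum_add hin] at hle ⊢
  rw [innerColSum_congr hrow, rowSum_congr (hrow i hin.ne)]
  by_cases hiJ : i ∈ J
  · rw [if_pos hiJ, hzero hiJ] at hle
    rw [fillLastRow_last_of_mem hiJ]
    simp only [hiJ, iff_true]
    omega
  · rw [if_neg hiJ] at hle
    rw [fillLastRow_last_of_notMem hiJ]
    simp only [hiJ, iff_false]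
    omega

theorem colSum_clearLastRow_tightRows (hi₁ : 1 ≤ i) (hin : i < n)
    (hle : colSum n b i ≤ i + rowSum b i) :
    colSum n (clearLastRow n (tightRows n b) b) i ≤
      (if i ∈ tightRows n b then i else i - 1) + rowSum (clearLastRow n (tightRows n b) b) i := by
  have hrow : ∀ l ≠ n, clearLastRow n (tightRows n b) b l = b l := fun l hl => clearLastRow_of_ne hl
  have htight : i ∈ tightRows n b ↔ colSum n b i = i + rowSum b i := by
    rw [mem_tightRows]
    exact and_iff_right (by omega)
  rw [colSum_eq_innerColSum_add hin] at hle htight ⊢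
  rw [innerColSum_congr hrow, rowSum_congr (hrow i hin.ne), clearLastRow_last]
  split_ifs with hiE
  · omega
  · have := htight.not.mp hiE
    omega

theorem fillLastRow_mem_tightArrays {k : ℕ} {p : Finset ℕ × (ℕ → ℕ → ℕ)}
    (hp : p ∈ restrictedArrays n k) :
    fillLastRow n p.1 p.2 ∈ tightArrays n k ∧ tightRows n (fillLastRow n p.1 p.2) = p.1 := by
  obtain ⟨hJ, hcard, hsupp, hzero, hle⟩ := hp
  have hrow : ∀ i, 1 ≤ i → i ≤ n - 1 → _ := fun i hi₁ hi₂ =>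
    colSum_fillLastRow hi₁ (by omega) (hle i hi₁ hi₂) (hzero i)
  have htight : tightRows n (fillLastRow n p.1 p.2) = p.1 := by
    ext i
    rw [mem_tightRows]
    constructor
    · rintro ⟨⟨hi₁, hi₂⟩, heq⟩
      exact (hrow i hi₁ hi₂).2.mp heq
    · intro hi
      have hi' := mem_Icc.mp (hJ hi)
      exact ⟨hi', (hrow i hi'.1 hi'.2).2.mpr hi⟩
  exact ⟨⟨hsupp.fillLastRow hJ, fun i hi₁ hi₂ => (hrow i hi₁ hi₂).1, by rw [htight]; exact hcard⟩, htight⟩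

theorem clearLastRow_mem_restrictedArrays {k : ℕ} (hb : b ∈ tightArrays n k) :
    (tightRows n b, clearLastRow n (tightRows n b) b) ∈ restrictedArrays n k := by
  obtain ⟨hsupp, hle, hcard⟩ := hb
  refine ⟨filter_subset _ _, hcard, hsupp.clearLastRow _, fun j hj => ?_, fun i hi₁ hi₂ => ?_⟩
  · simp [clearLastRow, hj]
  · exact colSum_clearLastRow_tightRows hi₁ (by omega) (hle i hi₁ hi₂)

theorem clearLastRow_fillLastRow (hzero : ∀ j ∈ J, b n j = 0) :
    clearLastRow n J (fillLastRow n J b) = b := by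
  ext i j
  by_cases h : i = n ∧ j ∈ J
  · obtain ⟨rfl, hj⟩ := h
    simp [clearLastRow, hj, hzero j hj]
  · simp [clearLastRow, fillLastRow, h]

/-- On a tight row the last-row entry equals the slack of the rest of the inequality. -/
theorem fillLastRow_clearLastRow (hE : E ⊆ tightRows n b) :
    fillLastRow n E (clearLastRow n E b) = b := by
  ext i j
  by_cases h : i = n ∧ j ∈ E
  · obtain ⟨rfl, hj⟩ := h
    obtain ⟨⟨hj₁, hjn⟩, heq⟩ := mem_tightRows.mp (hE hj)
    have hrow : ∀ l ≠ i, clearLastRow i E b l = b l := fun l hl => clearLastRow_of_ne hl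
    rw [colSum_eq_innerColSum_add (by omega)] at heq
    rw [fillLastRow_last_of_mem hj, innerColSum_congr hrow, rowSum_congr (hrow j (by omega))]
    omega
  · simp [fillLastRow, clearLastRow, h]

def lastRowEquiv (n k : ℕ) : restrictedArrays n k ≃ tightArrays n k where
  toFun p := ⟨fillLastRow n p.1.1 p.1.2, (fillLastRow_mem_tightArrays p.2).1⟩
  invFun b := ⟨_, clearLastRow_mem_restrictedArrays b.2⟩
  left_inv := by
    rintro ⟨⟨J, b⟩, hp⟩
    have htight := (fillLastRow_mem_tightArrays hp).2
    simp only at htight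
    ext1
    simp only [htight, clearLastRow_fillLastRow hp.2.2.2.1]
  right_inv := by
    rintro ⟨b, -⟩
    exact Subtype.ext (fillLastRow_clearLastRow subset_rfl)

end TriangularArray

theorem stmt11_general (n k : ℕ) :
    Nonempty (
      ({p : Finset ℕ × (ℕ → ℕ → ℕ) |
        p.1 ⊆ Finset.Icc 1 (n - 1) ∧ p.1.card = k - 1 ∧
        (∀ i j, ¬(1 ≤ j ∧ j + 1 ≤ i ∧ i ≤ n) → p.2 i j = 0) ∧
        (∀ j ∈ p.1, p.2 n j = 0) ∧
        (∀ i, 1 ≤ i → i ≤ n - 1 →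
          (∑ l ∈ Finset.Icc (i + 1) n, p.2 l i) ≤
            (if i ∈ p.1 then i else i - 1) +
              ∑ k' ∈ Finset.Icc 1 (i - 1), p.2 i k')} :
        Set (Finset ℕ × (ℕ → ℕ → ℕ))) ≃
      {b : ℕ → ℕ → ℕ |
        (∀ i j, ¬(1 ≤ j ∧ j + 1 ≤ i ∧ i ≤ n) → b i j = 0) ∧
        (∀ i, 1 ≤ i → i ≤ n - 1 →
          (∑ l ∈ Finset.Icc (i + 1) n, b l i) ≤
            i + ∑ k' ∈ Finset.Icc 1 (i - 1), b i k') ∧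
        ((Finset.Icc 1 (n - 1)).filter (fun i =>
            (∑ l ∈ Finset.Icc (i + 1) n, b l i) =
              i + ∑ k' ∈ Finset.Icc 1 (i - 1), b i k')).card = k - 1}) :=
  ⟨TriangularArray.lastRowEquiv n k⟩

/-- Fix `n ≥ 1` and `1 ≤ k ≤ n`.  Pairs `(J, b)` where `J` is a
`(k-1)`-subset of `[n-1]` and `b` is a triangular array of nonnegative integers
(entries for `1 ≤ j ≤ n-1`, `j+1 ≤ i ≤ n`) with `b n j = 0` for `j ∈ J` and
`b_{n,i}+⋯+b_{i+1,i} ≤ n_i + ∑_{k'=1}^{i-1} b_{i,k'}` for all `i ∈ [n-1]`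
(where `n_i = i` if `i ∈ J` and `n_i = i−1` otherwise) are in bijection with
triangular arrays `b̃` satisfying `b̃_{n,i}+⋯+b̃_{i+1,i} ≤ i + ∑_{k'=1}^{i-1} b̃_{i,k'}`
for all `i ∈ [n-1]` with exactly `k-1` of these inequalities holding with equality. -/
theorem stmt11 (n k : ℕ) (hk1 : 1 ≤ k) (hkn : k ≤ n) :
    Nonempty (
      ({p : Finset ℕ × (ℕ → ℕ → ℕ) |
        p.1 ⊆ Finset.Icc 1 (n - 1) ∧ p.1.card = k - 1 ∧
        (∀ i j, ¬(1 ≤ j ∧ j + 1 ≤ i ∧ i ≤ n) → p.2 i j = 0) ∧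
        (∀ j ∈ p.1, p.2 n j = 0) ∧
        (∀ i, 1 ≤ i → i ≤ n - 1 →
          (∑ l ∈ Finset.Icc (i + 1) n, p.2 l i) ≤
            (if i ∈ p.1 then i else i - 1) +
              ∑ k' ∈ Finset.Icc 1 (i - 1), p.2 i k')} :
        Set (Finset ℕ × (ℕ → ℕ → ℕ))) ≃
      {b : ℕ → ℕ → ℕ |
        (∀ i j, ¬(1 ≤ j ∧ j + 1 ≤ i ∧ i ≤ n) → b i j = 0) ∧
        (∀ i, 1 ≤ i → i ≤ n - 1 →
          (∑ l ∈ Finset.Icc (i + 1) n, b l i) ≤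
            i + ∑ k' ∈ Finset.Icc 1 (i - 1), b i k') ∧
        ((Finset.Icc 1 (n - 1)).filter (fun i =>
            (∑ l ∈ Finset.Icc (i + 1) n, b l i) =
              i + ∑ k' ∈ Finset.Icc 1 (i - 1), b i k')).card = k - 1}) :=
  stmt11_general n k
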